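/- Fix integers 1 ≤ j < k, let c = C(k,j)-1, p₀ = 1/(c·C(n,k-j)), and p = (1-ε)p₀ where ε = ε(n) > 0, ε → 0, and ε³nʲ → ∞. Then with high probability as n → ∞, every j-component of the random k-uniform hypergraph H^k(n,p) contains at most 3ck·ε⁻²·log n j-sets. -/

import Mathlib

open Filter MeasureTheory
open scoped ENNReal

/-- Two `j`-sets are `j`-connected via a chain of edges with consecutive intersections
of size at least `j`. -/
def jConn {V : Type*} [DecidableEq V] (E : Finset (Finset V)) (j : ℕ)
    (J₁ J₂ : Finset V) : Prop :=
  ∃ l : List (Finset V), ∃ h : l ≠ [],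
    (∀ e ∈ l, e ∈ E) ∧ l.Chain' (fun a b => j ≤ (a ∩ b).card) ∧
    J₁ ⊆ l.head h ∧ J₂ ⊆ l.getLast h

/-- The edge set of the `k`-uniform hypergraph on `[n]` encoded by the indicator
function `ω` on `k`-sets. -/
def edgesOf {n : ℕ} (ω : Finset (Fin n) → Bool) (k : ℕ) : Finset (Finset (Fin n)) :=
  Finset.univ.filter (fun S => S.card = k ∧ ω S = true)

/-- The Bernoulli `PMF` with parameter `p : ℝ≥0∞` (the older Mathlib's `PMF.bernoulli`). -/
noncomputable def bernoulliPMF (p : ℝ≥0∞) (h : p ≤ 1) : PMF Bool :=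
  PMF.ofFintype (fun b => cond b p (1 - p)) (by simp [h])

/-- The distribution of `H^k(n,p)`: every potential edge is present independently with
probability `p`, as a product of Bernoulli measures over all subsets of `[n]`
(only those of size `k` are read off by `edgesOf`). -/
noncomputable def hyperMeasure (n : ℕ) (p : ℝ≥0∞) (hp : p ≤ 1) :
    Measure (Finset (Fin n) → Bool) :=
  Measure.pi (fun _ => (bernoulliPMF p hp).toMeasure)

/-!
Explore the `j`-component of a root `j`-set breadth first for at most `m` steps. A step pops a
`j`-set `J` and examines the not yet examined `k`-sets through `J`, at most `N = C(n, k-j)` of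
them; each present one queues at most `c = C(k,j) - 1` new `j`-sets. A component with at least
`m` `j`-sets therefore forces at least `(m-1)/c` present edges among at most `mN` examined
`k`-sets. Since no `k`-set is examined twice, the exponential moment of the number of edges found
is at most that of `Bin(mN, p)`. With `x = 1/(1-ε)`, Markov's inequality bounds the probability
by `(1 + ε/(cN))^(mN) (1-ε)^((m-1)/c) ≤ exp((ε + ε²/2 - mε²/2)/c)`, and for `m ≥ 3ck ε⁻² log n`
the union bound over the at most `n^j` roots leaves `e²/n`.
-/

open Finset

namespace RandomHypergraph

section JComponents

variable {V : Type*} [DecidableEq V]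

theorem mem_of_jConn {E : Finset (Finset V)} {j : ℕ} {C : Set (Finset V)}
    (hC : ∀ e ∈ E, ∀ K ∈ e.powersetCard j, K ∈ C → ∀ K' ∈ e.powersetCard j, K' ∈ C)
    {J₁ J₂ : Finset V} (h : jConn E j J₁ J₂) (hJ₁ : J₁.card = j) (hJ₂ : J₂.card = j)
    (h₁ : J₁ ∈ C) : J₂ ∈ C := by
  obtain ⟨l, hl, hE, hchain, hhead, hlast⟩ := h
  have covered : ∀ e ∈ l, ∀ K ∈ e.powersetCard j, K ∈ C := by
    refine (hchain.imp_of_mem_imp (S := fun a b => b ∈ E ∧ j ≤ (a ∩ b).card)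
      (fun a b _ hb hab => ⟨hE b hb, hab⟩)).induction _ _ ?_ ?_
    · rintro a b ⟨hb, hab⟩ ha
      obtain ⟨K, hK, hKcard⟩ := exists_subset_card_eq hab
      exact hC b hb K (mem_powersetCard.2 ⟨hK.trans inter_subset_right, hKcard⟩)
        (ha K (mem_powersetCard.2 ⟨hK.trans inter_subset_left, hKcard⟩))
    · intro hl'
      exact hC _ (hE _ (List.head_mem hl')) J₁ (mem_powersetCard.2 ⟨hhead, hJ₁⟩) h₁
  exact covered _ (List.getLast_mem hl) J₂ (mem_powersetCard.2 ⟨hlast, hJ₂⟩)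

def HasLargeJComponent (E : Finset (Finset V)) (j m : ℕ) : Prop :=
  ∃ S : Finset (Finset V), (∀ J ∈ S, J.card = j) ∧ (∀ J₁ ∈ S, ∀ J₂ ∈ S, jConn E j J₁ J₂) ∧
    m ≤ S.card

theorem hasLargeJComponent_floor_add_one {E : Finset (Finset V)} {j : ℕ} {M : ℝ} (hM : 0 ≤ M)
    (h : ¬∀ S : Finset (Finset V), (∀ J ∈ S, J.card = j) →
      (∀ J₁ ∈ S, ∀ J₂ ∈ S, jConn E j J₁ J₂) → (S.card : ℝ) ≤ M) :
    HasLargeJComponent E j (⌊M⌋₊ + 1) := by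
  simp only [not_forall, not_le] at h
  obtain ⟨S, hSj, hSconn, hlt⟩ := h
  exact ⟨S, hSj, hSconn, (Nat.floor_lt hM).2 hlt⟩

end JComponents

theorem sum_powerset_union_of_disjoint {β M : Type*} [DecidableEq β] [AddCommMonoid M]
    {u v : Finset β} (h : Disjoint u v) (f : Finset β → M) :
    ∑ T ∈ (u ∪ v).powerset, f T = ∑ A ∈ u.powerset, ∑ B ∈ v.powerset, f (A ∪ B) := by
  induction u using Finset.induction_on generalizing f with
  | empty => simp
  | insert a u ha ih =>
    obtain ⟨hav, huv⟩ := disjoint_insert_left.1 h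
    rw [insert_union, sum_powerset_insert (by simp [ha, hav]), ih huv, ih huv,
      sum_powerset_insert ha]
    simp only [insert_union]

theorem pow_card_union_mul_pow_card_sub {β M : Type*} [DecidableEq β] [CommMonoid M] (a b : M)
    {Q R A B : Finset β} (hQR : Q ⊆ R) (hA : A ⊆ Q) (hB : B ⊆ R \ Q) :
    a ^ #(A ∪ B) * b ^ (#R - #(A ∪ B)) =
      a ^ #A * b ^ (#Q - #A) * (a ^ #B * b ^ (#(R \ Q) - #B)) := by
  have hAB : Disjoint A B :=
    disjoint_of_subset_left hA (disjoint_of_subset_right hB disjoint_sdiff)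
  have hcard := card_sdiff_add_card_eq_card hQR
  have := card_le_card hA
  have := card_le_card hB
  rw [card_union_of_disjoint hAB, show #R - (#A + #B) = (#Q - #A) + (#(R \ Q) - #B) by omega,
    pow_add, pow_add, mul_mul_mul_comm]

theorem sum_weight_eq_one {β : Type*} {p : ℝ≥0∞} (hp : p ≤ 1) (R : Finset β) :
    ∑ T ∈ R.powerset, p ^ #T * (1 - p) ^ (#R - #T) = 1 := by
  rw [sum_pow_mul_eq_add_pow, add_tsub_cancel_of_le hp, one_pow]

theorem one_le_one_sub_add_mul {p x : ℝ≥0∞} (hp : p ≤ 1) (hx : 1 ≤ x) : 1 ≤ 1 - p + p * x :=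
  calc 1 = 1 - p + p := (tsub_add_cancel_of_le hp).symm
    _ ≤ 1 - p + p * x := by gcongr; exact le_mul_of_one_le_right' hx

/-- `steps` counts pops with multiplicity, since the queue may hold a `j`-set more than once. -/
structure ExploreState (α : Type*) where
  edges : ℕ
  steps : ℕ
  visited : Finset (Finset α)
  unexamined : Finset (Finset α)
  queue : List (Finset α)

section Exploration

variable {α : Type*} [DecidableEq α] (j k : ℕ)

def kSetsThrough (R : Finset (Finset α)) (J : Finset α) : Finset (Finset α) :=
  R.filter fun e => J ⊆ e ∧ e.card = k

def newJSets (P : Finset (Finset α)) (J : Finset α) : Finset (Finset α) :=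
  (P.biUnion (·.powersetCard j)).erase J

noncomputable def explore (ω : Finset α → Bool) :
    ℕ → List (Finset α) → Finset (Finset α) → ExploreState α
  | 0, q, R => ⟨0, 0, ∅, R, q⟩
  | _ + 1, [], R => ⟨0, 0, ∅, R, []⟩
  | b + 1, J :: q, R =>
    let P := (kSetsThrough k R J).filter (ω · = true)
    let st := explore ω b (q ++ (newJSets j P J).toList) (R \ kSetsThrough k R J)
    ⟨P.card + st.edges, st.steps + 1, insert J st.visited, st.unexamined, st.queue⟩

variable {j k}

theorem card_of_mem_newJSets {P : Finset (Finset α)} {J K : Finset α} (h : K ∈ newJSets j P J) :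
    K.card = j := by
  obtain ⟨e, -, hK⟩ := mem_biUnion.1 (mem_of_mem_erase h)
  exact (mem_powersetCard.1 hK).2

theorem card_newJSets_le {P : Finset (Finset α)} {J : Finset α} (hJ : J.card = j)
    (hP : ∀ e ∈ P, J ⊆ e ∧ e.card = k) :
    (newJSets j P J).card ≤ (k.choose j - 1) * P.card := by
  rw [newJSets, erase_biUnion, mul_comm, ← smul_eq_mul, ← sum_const]
  refine card_biUnion_le.trans (sum_le_sum fun e he => ?_)
  rw [card_erase_of_mem (mem_powersetCard.2 ⟨(hP e he).1, hJ⟩), card_powersetCard, (hP e he).2]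

theorem card_kSetsThrough_le [Fintype α] (R : Finset (Finset α)) {J : Finset α}
    (hJ : J.card = j) : (kSetsThrough k R J).card ≤ (Fintype.card α).choose (k - j) := by
  rw [← card_univ, ← card_powersetCard]
  refine card_le_card_of_injOn (· \ J) (fun e he => ?_) (fun a ha b hb hab => ?_)
  · obtain ⟨hJe, he⟩ := (mem_filter.1 he).2
    exact mem_powersetCard.2 ⟨subset_univ _, by rw [card_sdiff_of_subset hJe, he, hJ]⟩
  · have ha := (mem_filter.1 ha).2.1
    have hb := (mem_filter.1 hb).2.1
    rw [← sdiff_union_of_subset ha, ← sdiff_union_of_subset hb]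
    exact congrArg (· ∪ J) hab

variable (ω : Finset α → Bool)

theorem visited_card_le_steps : ∀ (b : ℕ) (q : List (Finset α)) (R : Finset (Finset α)),
    (explore j k ω b q R).visited.card ≤ (explore j k ω b q R).steps
  | 0, _, _ | _ + 1, [], _ => le_rfl
  | b + 1, _ :: _, _ =>
    (card_insert_le _ _).trans (Nat.add_le_add_right (visited_card_le_steps b _ _) 1)

theorem steps_le : ∀ (b : ℕ) (q : List (Finset α)) (R : Finset (Finset α)),
    (∀ J ∈ q, J.card = j) →
    (explore j k ω b q R).steps ≤ q.length + (k.choose j - 1) * (explore j k ω b q R).edges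
  | 0, _, _, _ | _ + 1, [], _, _ => Nat.zero_le _
  | b + 1, J :: q, R, hq => by
    set P := (kSetsThrough k R J).filter (ω · = true)
    have hP : ∀ e ∈ P, J ⊆ e ∧ e.card = k := fun e he => (mem_filter.1 (mem_filter.1 he).1).2
    have hnew := card_newJSets_le (hq J List.mem_cons_self) hP
    have ih := steps_le b (q ++ (newJSets j P J).toList) (R \ kSetsThrough k R J) fun K hK =>
      (List.mem_append.1 hK).elim (fun h => hq K (List.mem_cons_of_mem _ h))
        (fun h => card_of_mem_newJSets (mem_toList.1 h))
    simp only [List.length_append, length_toList] at ih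
    change _ + 1 ≤ q.length + 1 + (k.choose j - 1) * (P.card + _)
    linarith

theorem unexamined_subset : ∀ (b : ℕ) (q : List (Finset α)) (R : Finset (Finset α)),
    (explore j k ω b q R).unexamined ⊆ R
  | 0, _, _ | _ + 1, [], _ => Subset.rfl
  | b + 1, _ :: _, _ => (unexamined_subset b _ _).trans sdiff_subset

theorem not_subset_of_mem_visited : ∀ (b : ℕ) (q : List (Finset α)) (R : Finset (Finset α)),
    ∀ J ∈ (explore j k ω b q R).visited, ∀ e ∈ (explore j k ω b q R).unexamined,
      e.card = k → ¬J ⊆ e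
  | 0, _, _ | _ + 1, [], _ => by simp [explore]
  | b + 1, J' :: q, R => by
    intro J hJ e he hek
    rcases mem_insert.1 hJ with rfl | hJ
    · intro hJe
      have he' := unexamined_subset ω b _ _ he
      exact (Finset.mem_sdiff.1 he').2 (mem_filter.2 ⟨(Finset.mem_sdiff.1 he').1, hJe, hek⟩)
    · exact not_subset_of_mem_visited b _ _ J hJ e he hek

theorem steps_eq_of_queue_ne_nil : ∀ (b : ℕ) (q : List (Finset α)) (R : Finset (Finset α)),
    (explore j k ω b q R).queue ≠ [] → (explore j k ω b q R).steps = b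
  | 0, _, _, _ => rfl
  | _ + 1, [], _, h => absurd rfl h
  | b + 1, _ :: _, _, h => congrArg (· + 1) (steps_eq_of_queue_ne_nil b _ _ h)

theorem mem_visited_of_queue_eq_nil : ∀ (b : ℕ) (q : List (Finset α)) (R : Finset (Finset α)),
    (explore j k ω b q R).queue = [] →
      (∀ J ∈ q, J ∈ (explore j k ω b q R).visited) ∧
      ∀ e ∈ R, e ∉ (explore j k ω b q R).unexamined → ω e = true → e.card = k →
        ∀ K ∈ e.powersetCard j, K ∈ (explore j k ω b q R).visited
  | 0, _, _, h => by simp_all [explore]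
  | _ + 1, [], _, _ => by simp_all [explore]
  | b + 1, J :: q, R, h => by
    set P := (kSetsThrough k R J).filter (ω · = true)
    obtain ⟨ihq, ihR⟩ :=
      mem_visited_of_queue_eq_nil b (q ++ (newJSets j P J).toList) (R \ kSetsThrough k R J) h
    refine ⟨fun J' hJ' => ?_, fun e heR he hωe hek K hK => ?_⟩
    · rcases List.mem_cons.1 hJ' with rfl | hJ'
      · exact mem_insert_self _ _
      · exact mem_insert_of_mem (ihq J' (List.mem_append_left _ hJ'))
    by_cases heQ : e ∈ kSetsThrough k R J
    · by_cases hKJ : K = J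
      · exact hKJ ▸ mem_insert_self _ _
      refine mem_insert_of_mem (ihq K (List.mem_append_right _ (mem_toList.2 ?_)))
      exact mem_erase.2 ⟨hKJ, mem_biUnion.2 ⟨e, mem_filter.2 ⟨heQ, hωe⟩, hK⟩⟩
    · exact mem_insert_of_mem (ihR e (Finset.mem_sdiff.2 ⟨heR, heQ⟩) he hωe hek K hK)

theorem visited_closed {b : ℕ} {q : List (Finset α)} {R : Finset (Finset α)}
    (h : (explore j k ω b q R).queue = []) {e : Finset α} (heR : e ∈ R) (hωe : ω e = true)
    (hek : e.card = k) :
    ∀ K ∈ e.powersetCard j, K ∈ (explore j k ω b q R).visited →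
      ∀ K' ∈ e.powersetCard j, K' ∈ (explore j k ω b q R).visited := fun K hK hKv =>
  (mem_visited_of_queue_eq_nil ω b q R h).2 e heR
    (fun he => not_subset_of_mem_visited ω b q R K hKv e he hek (mem_powersetCard.1 hK).1) hωe hek

theorem explore_congr {ω ω' : Finset α → Bool} :
    ∀ (b : ℕ) (q : List (Finset α)) (R : Finset (Finset α)),
    (∀ e ∈ R, ω e = ω' e) → explore j k ω b q R = explore j k ω' b q R
  | 0, _, _, _ | _ + 1, [], _, _ => rfl
  | b + 1, J :: q, R, h => by
    have hP : (kSetsThrough k R J).filter (ω · = true) =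
        (kSetsThrough k R J).filter (ω' · = true) :=
      filter_congr fun e he => by rw [h e (mem_filter.1 he).1]
    simp only [explore, hP,
      explore_congr b _ (R \ kSetsThrough k R J) fun e he => h e (Finset.mem_sdiff.1 he).1]

theorem edges_explore_union {b : ℕ} {J : Finset α} {q : List (Finset α)} {R A B : Finset (Finset α)}
    (hA : A ⊆ kSetsThrough k R J) (hB : B ⊆ R \ kSetsThrough k R J) :
    (explore j k (fun e => decide (e ∈ A ∪ B)) (b + 1) (J :: q) R).edges =
      #A + (explore j k (fun e => decide (e ∈ B)) b (q ++ (newJSets j A J).toList)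
        (R \ kSetsThrough k R J)).edges := by
  have hP : (kSetsThrough k R J).filter (fun e => decide (e ∈ A ∪ B) = true) = A := by
    ext e
    have := @hA e
    have := fun h : e ∈ B => (Finset.mem_sdiff.1 (hB h)).2
    simp only [mem_filter, decide_eq_true_eq, mem_union]
    tauto
  simp only [explore, hP]
  rw [explore_congr b _ _ fun e he => ?_]
  have : e ∉ A := fun h => (Finset.mem_sdiff.1 he).2 (hA h)
  simp [this]

/-- `p ^ #T * (1 - p) ^ (#R - #T)` is the probability that the present `k`-sets within `R` are
exactly `T`, and the right-hand side is the exponential moment of `Bin(bN, p)`. -/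
theorem sum_weight_mul_pow_edges_le [Fintype α] {p x : ℝ≥0∞} (hp : p ≤ 1) (hx : 1 ≤ x) :
    ∀ (b : ℕ) (q : List (Finset α)) (R : Finset (Finset α)), (∀ J ∈ q, J.card = j) →
    ∑ T ∈ R.powerset, p ^ #T * (1 - p) ^ (#R - #T) *
        x ^ (explore j k (fun e => decide (e ∈ T)) b q R).edges
      ≤ (1 - p + p * x) ^ (b * (Fintype.card α).choose (k - j))
  | 0, _, R, _ | _ + 1, [], R, _ => by
    simp only [explore, pow_zero, mul_one, sum_weight_eq_one hp]
    exact one_le_pow₀ (one_le_one_sub_add_mul hp hx)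
  | b + 1, J :: q, R, hq => by
    set Q := kSetsThrough k R J
    set N := (Fintype.card α).choose (k - j)
    have hQR : Q ⊆ R := filter_subset _ _
    calc ∑ T ∈ R.powerset, p ^ #T * (1 - p) ^ (#R - #T) *
          x ^ (explore j k (fun e => decide (e ∈ T)) (b + 1) (J :: q) R).edges
        = ∑ A ∈ Q.powerset, (p * x) ^ #A * (1 - p) ^ (#Q - #A) *
            ∑ B ∈ (R \ Q).powerset, p ^ #B * (1 - p) ^ (#(R \ Q) - #B) *
              x ^ (explore j k (fun e => decide (e ∈ B)) b (q ++ (newJSets j A J).toList)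
                (R \ Q)).edges := by
          rw [show R.powerset = (Q ∪ (R \ Q)).powerset by rw [union_sdiff_of_subset hQR],
            sum_powerset_union_of_disjoint disjoint_sdiff]
          refine sum_congr rfl fun A hA => ?_
          rw [mul_sum]
          refine sum_congr rfl fun B hB => ?_
          rw [pow_card_union_mul_pow_card_sub p (1 - p) hQR (mem_powerset.1 hA) (mem_powerset.1 hB),
            edges_explore_union (mem_powerset.1 hA) (mem_powerset.1 hB), pow_add, mul_pow]
          ring
      _ ≤ ∑ A ∈ Q.powerset, (p * x) ^ #A * (1 - p) ^ (#Q - #A) * (1 - p + p * x) ^ (b * N) := by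
          gcongr with A hA
          refine sum_weight_mul_pow_edges_le hp hx b _ _ fun K hK => ?_
          rcases List.mem_append.1 hK with hK | hK
          · exact hq K (List.mem_cons_of_mem _ hK)
          · exact card_of_mem_newJSets (mem_toList.1 hK)
      _ = (1 - p + p * x) ^ #Q * (1 - p + p * x) ^ (b * N) := by
          rw [← sum_mul, sum_pow_mul_eq_add_pow, add_comm (p * x)]
      _ ≤ (1 - p + p * x) ^ N * (1 - p + p * x) ^ (b * N) := by
          gcongr
          · exact one_le_one_sub_add_mul hp hx
          · exact card_kSetsThrough_le R (hq J List.mem_cons_self)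
      _ = (1 - p + p * x) ^ ((b + 1) * N) := by rw [← pow_add]; ring

end Exploration

theorem HasLargeJComponent.exists_root_le_one_add_mul_edges {n j k m : ℕ}
    {ω : Finset (Fin n) → Bool} (hm : 0 < m)
    (h : HasLargeJComponent (edgesOf ω k) j m) :
    ∃ J₀ ∈ (univ : Finset (Fin n)).powersetCard j,
      m ≤ 1 + (k.choose j - 1) * (explore j k ω m [J₀] univ).edges := by
  obtain ⟨S, hSj, hSconn, hmS⟩ := h
  obtain ⟨J₀, hJ₀⟩ := card_pos.1 (hm.trans_le hmS)
  refine ⟨J₀, mem_powersetCard.2 ⟨subset_univ _, hSj J₀ hJ₀⟩, ?_⟩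
  set X := explore j k ω m [J₀] univ
  have hsteps : X.steps ≤ 1 + (k.choose j - 1) * X.edges :=
    steps_le ω m [J₀] univ (by simpa using hSj J₀ hJ₀)
  by_cases hq : X.queue = []
  · have hS : S ⊆ X.visited := fun J hJ =>
      mem_of_jConn (C := X.visited)
        (fun e he => visited_closed ω hq (mem_univ e) (mem_filter.1 he).2.2 (mem_filter.1 he).2.1)
        (hSconn J₀ hJ₀ J hJ) (hSj J₀ hJ₀) (hSj J hJ)
        ((mem_visited_of_queue_eq_nil ω m [J₀] univ hq).1 J₀ (List.mem_singleton_self _))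
    calc m ≤ S.card := hmS
      _ ≤ X.visited.card := card_le_card hS
      _ ≤ X.steps := visited_card_le_steps ω m [J₀] univ
      _ ≤ _ := hsteps
  · exact steps_eq_of_queue_ne_nil ω m [J₀] univ hq ▸ hsteps

theorem sub_one_div_le_of_le_one_add_mul {m c s : ℕ} (h : m ≤ 1 + c * s) :
    ((m : ℝ) - 1) / c ≤ s := by
  rcases c.eq_zero_or_pos with rfl | hc
  · simp
  have : (m : ℝ) ≤ 1 + c * s := by exact_mod_cast h
  rw [div_le_iff₀ (by exact_mod_cast hc)]
  linarith

def finsetEquivBoolFun (β : Type*) [Fintype β] [DecidableEq β] : Finset β ≃ (β → Bool) where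
  toFun T e := decide (e ∈ T)
  invFun ω := univ.filter (ω · = true)
  left_inv T := by ext; simp
  right_inv ω := by funext e; simp

instance (n : ℕ) (p : ℝ≥0∞) (hp : p ≤ 1) : IsProbabilityMeasure (hyperMeasure n p hp) := by
  unfold hyperMeasure
  infer_instance

section HyperMeasure

variable {n : ℕ} {p : ℝ≥0∞} (hp : p ≤ 1)

theorem hyperMeasure_singleton (ω : Finset (Fin n) → Bool) :
    hyperMeasure n p hp {ω} = ∏ e, cond (ω e) p (1 - p) := by
  rw [hyperMeasure, ← Set.univ_pi_singleton ω, Measure.pi_pi]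
  refine prod_congr rfl fun e _ => ?_
  rw [PMF.toMeasure_apply_singleton _ _ (measurableSet_singleton _), bernoulliPMF,
    PMF.ofFintype_apply]

theorem lintegral_hyperMeasure (f : (Finset (Fin n) → Bool) → ℝ≥0∞) :
    ∫⁻ ω, f ω ∂hyperMeasure n p hp =
      ∑ T ∈ (univ : Finset (Finset (Fin n))).powerset,
        p ^ #T * (1 - p) ^ (#(univ : Finset (Finset (Fin n))) - #T) *
          f (fun e => decide (e ∈ T)) := by
  rw [lintegral_fintype, powerset_univ]
  refine (Fintype.sum_equiv (finsetEquivBoolFun _) _ _ fun T => ?_).symm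
  rw [mul_comm, finsetEquivBoolFun, Equiv.coe_fn_mk, hyperMeasure_singleton]
  simp only [Bool.cond_decide]
  rw [prod_ite, prod_const, prod_const, filter_mem_eq_inter, univ_inter, filter_not,
    filter_mem_eq_inter, univ_inter, card_sdiff_of_subset (subset_univ T)]

theorem measure_rpow_le_pow_edges_le {j k m : ℕ} {x : ℝ≥0∞} (hx : 1 ≤ x) (hxt : x ≠ ⊤) (t : ℝ)
    {J₀ : Finset (Fin n)} (hJ₀ : J₀.card = j) :
    hyperMeasure n p hp {ω | x ^ t ≤ x ^ (explore j k ω m [J₀] univ).edges}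
      ≤ (1 - p + p * x) ^ (m * n.choose (k - j)) / x ^ t := by
  have hx0 : x ≠ 0 := (zero_lt_one.trans_le hx).ne'
  refine (meas_ge_le_lintegral_div Measurable.of_discrete.aemeasurable
    (ENNReal.rpow_pos (pos_iff_ne_zero.2 hx0) hxt).ne'
    (ENNReal.rpow_ne_top_of_ne_zero hx0 hxt)).trans ?_
  gcongr
  rw [lintegral_hyperMeasure]
  simpa using sum_weight_mul_pow_edges_le (k := k) hp hx m [J₀] univ (by simpa using hJ₀)

theorem measure_hasLargeJComponent_le {j k m : ℕ} {x : ℝ≥0∞} (hx : 1 ≤ x) (hxt : x ≠ ⊤)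
    (hm : 0 < m) :
    hyperMeasure n p hp {ω | HasLargeJComponent (edgesOf ω k) j m}
      ≤ n.choose j * ((1 - p + p * x) ^ (m * n.choose (k - j)) /
          x ^ (((m : ℝ) - 1) / (k.choose j - 1 : ℕ))) := by
  set t := ((m : ℝ) - 1) / (k.choose j - 1 : ℕ)
  have hsub : {ω | HasLargeJComponent (edgesOf ω k) j m} ⊆
      ⋃ J₀ ∈ (univ : Finset (Fin n)).powersetCard j,
        {ω | x ^ t ≤ x ^ (explore j k ω m [J₀] univ).edges} := by
    intro ω hω
    obtain ⟨J₀, hJ₀, hle⟩ := hω.exists_root_le_one_add_mul_edges hm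
    refine Set.mem_biUnion hJ₀ ?_
    rw [Set.mem_ofPred_eq, ← ENNReal.rpow_natCast]
    exact ENNReal.rpow_le_rpow_of_exponent_le hx (sub_one_div_le_of_le_one_add_mul hle)
  calc hyperMeasure n p hp {ω | HasLargeJComponent (edgesOf ω k) j m}
      ≤ ∑ J₀ ∈ (univ : Finset (Fin n)).powersetCard j,
          hyperMeasure n p hp {ω | x ^ t ≤ x ^ (explore j k ω m [J₀] univ).edges} :=
        (measure_mono hsub).trans (measure_biUnion_finset_le _ _)
    _ ≤ ∑ _J₀ ∈ (univ : Finset (Fin n)).powersetCard j,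
          (1 - p + p * x) ^ (m * n.choose (k - j)) / x ^ t :=
        sum_le_sum fun J₀ hJ₀ =>
          measure_rpow_le_pow_edges_le hp hx hxt t (mem_powersetCard.1 hJ₀).2
    _ = _ := by rw [sum_const, card_powersetCard, card_univ, Fintype.card_fin, nsmul_eq_mul]

end HyperMeasure

theorem add_sq_div_two_le_neg_log_one_sub {ε : ℝ} (h0 : 0 ≤ ε) (h1 : ε < 1) :
    ε + ε ^ 2 / 2 ≤ -Real.log (1 - ε) := by
  have hs := Real.hasSum_pow_div_log_of_abs_lt_one (by rwa [abs_of_nonneg h0])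
  have := sum_le_hasSum (range 2) (fun i _ => by positivity) hs
  norm_num [sum_range_succ] at this
  linarith

theorem choose_mul_pow_div_rpow_le {n j k c N m : ℕ} {ε : ℝ} (hε0 : 0 < ε) (hε1 : ε < 1)
    (hjk : j < k) (hc : 0 < c) (hN : 0 < N) (hn : 0 < n) (hm₁ : 1 ≤ m)
    (hm : 3 * c * k * Real.log n / ε ^ 2 ≤ m) :
    n.choose j * ((1 + ε / (c * N)) ^ (m * N) / (1 / (1 - ε)) ^ (((m : ℝ) - 1) / c))
      ≤ Real.exp 2 / n := by
  set L := Real.log n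
  have hL : 0 ≤ L := Real.log_nonneg (by exact_mod_cast hn)
  have hcR : (0 : ℝ) < c := by exact_mod_cast hc
  have hchoose : (n.choose j : ℝ) ≤ Real.exp (j * L) := by
    rw [Real.exp_nat_mul, Real.exp_log (by exact_mod_cast hn)]
    exact_mod_cast Nat.choose_le_pow n j
  have hgrowth : (1 + ε / (c * N)) ^ (m * N) ≤ Real.exp (m * ε / c) := by
    calc (1 + ε / (c * N)) ^ (m * N) ≤ Real.exp (ε / (c * N)) ^ (m * N) := by
          gcongr
          linarith [Real.add_one_le_exp (ε / (c * N))]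
      _ = Real.exp (m * ε / c) := by
          rw [← Real.exp_nat_mul]
          congr 1
          push_cast
          field_simp
  have hdecay : Real.exp ((ε + ε ^ 2 / 2) * (((m : ℝ) - 1) / c))
      ≤ (1 / (1 - ε)) ^ (((m : ℝ) - 1) / c) := by
    rw [Real.rpow_def_of_pos (by bound), one_div, Real.log_inv]
    gcongr
    · exact div_nonneg (by simp [hm₁]) hcR.le
    · exact add_sq_div_two_le_neg_log_one_sub hε0.le hε1
  have hexponent : j * L + m * ε / c - (ε + ε ^ 2 / 2) * (((m : ℝ) - 1) / c) ≤ 2 - L := by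
    have hmε : 3 * c * k * L ≤ m * ε ^ 2 := by rwa [div_le_iff₀ (by positivity)] at hm
    have hjkR : (j : ℝ) + 1 ≤ k := by exact_mod_cast hjk
    have hc1 : (1 : ℝ) ≤ c := by exact_mod_cast hc
    have key : ε + ε ^ 2 / 2 - m * ε ^ 2 / 2 ≤ (2 - L - j * L) * c := by
      nlinarith [mul_le_mul_of_nonneg_left hjkR (mul_nonneg hcR.le hL)]
    have := (div_le_iff₀ hcR).2 key
    calc j * L + m * ε / c - (ε + ε ^ 2 / 2) * (((m : ℝ) - 1) / c)
        = j * L + (ε + ε ^ 2 / 2 - m * ε ^ 2 / 2) / c := by field_simp; ring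
      _ ≤ 2 - L := by linarith
  calc n.choose j * ((1 + ε / (c * N)) ^ (m * N) / (1 / (1 - ε)) ^ (((m : ℝ) - 1) / c))
      ≤ Real.exp (j * L) * (Real.exp (m * ε / c) /
          Real.exp ((ε + ε ^ 2 / 2) * (((m : ℝ) - 1) / c))) := by
        gcongr
    _ = Real.exp (j * L + m * ε / c - (ε + ε ^ 2 / 2) * (((m : ℝ) - 1) / c)) := by
        rw [add_sub_assoc, Real.exp_add, Real.exp_sub]
    _ ≤ Real.exp (2 - L) := Real.exp_le_exp.2 hexponent
    _ = Real.exp 2 / n := by rw [Real.exp_sub, Real.exp_log (by exact_mod_cast hn)]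

theorem one_sub_add_mul_ofReal_eq {a ε : ℝ} (ha : 0 ≤ a) (hε1 : ε < 1) (hq : (1 - ε) * a ≤ 1) :
    1 - ENNReal.ofReal ((1 - ε) * a) + ENNReal.ofReal ((1 - ε) * a) * ENNReal.ofReal (1 / (1 - ε))
      = ENNReal.ofReal (1 + ε * a) := by
  have h1ε : 0 < 1 - ε := by linarith
  rw [← ENNReal.ofReal_one, ← ENNReal.ofReal_mul (by positivity),
    ← ENNReal.ofReal_sub _ (by positivity), ← ENNReal.ofReal_add (sub_nonneg.2 hq) (by positivity)]
  congr 1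
  field_simp
  ring

theorem tendsto_measure_of_tendsto_measure_compl {ι : Type*} {l : Filter ι} {Ω : ι → Type*}
    [∀ i, MeasurableSpace (Ω i)] {μ : ∀ i, Measure (Ω i)} [∀ i, IsProbabilityMeasure (μ i)]
    {A : ∀ i, Set (Ω i)} (hA : ∀ i, MeasurableSet (A i))
    (h : Tendsto (fun i => μ i (A i)ᶜ) l (nhds 0)) : Tendsto (fun i => μ i (A i)) l (nhds 1) := by
  have := ENNReal.Tendsto.sub tendsto_const_nhds h (Or.inl ENNReal.one_ne_top) (a := 1)
  rw [tsub_zero] at this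
  refine this.congr fun i => ?_
  rw [prob_compl_eq_one_sub (hA i), ENNReal.sub_sub_cancel ENNReal.one_ne_top prob_le_one]

theorem hyperMeasure_compl_jComponents_le {n j k : ℕ} (hj : 1 ≤ j) (hjk : j < k) (hkn : k ≤ n)
    {ε : ℝ} (hε0 : 0 < ε) (hε1 : ε < 1) {p : ℝ≥0∞} (hp1 : p ≤ 1)
    (hp : p = ENNReal.ofReal ((1 - ε) * (1 / (((k.choose j : ℝ) - 1) * (n.choose (k - j) : ℝ))))) :
    hyperMeasure n p hp1
        {ω | ∀ S : Finset (Finset (Fin n)),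
          (∀ J ∈ S, J.card = j) →
          (∀ J₁ ∈ S, ∀ J₂ ∈ S, jConn (edgesOf ω k) j J₁ J₂) →
          (S.card : ℝ) ≤ 3 * ((k.choose j : ℝ) - 1) * k * Real.log n / ε ^ 2}ᶜ
      ≤ ENNReal.ofReal (Real.exp 2 / n) := by
  have hc : 2 ≤ k.choose j := by
    have := Nat.choose_le_choose j hjk
    rw [Nat.choose_succ_self_right] at this
    omega
  set c := k.choose j - 1
  have hcR : (k.choose j : ℝ) - 1 = c := by rw [Nat.cast_sub (by omega), Nat.cast_one]
  set N := n.choose (k - j)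
  have hN : 0 < N := Nat.choose_pos (by omega)
  set M := 3 * ((k.choose j : ℝ) - 1) * k * Real.log n / ε ^ 2 with hMdef
  have hM : 0 ≤ M := by rw [hMdef, hcR]; have := Real.log_natCast_nonneg n; positivity
  set m := ⌊M⌋₊ + 1
  have h1ε : 0 < 1 - ε := by linarith
  have hcN : (1 : ℝ) ≤ c * N :=
    one_le_mul_of_one_le_of_one_le (by exact_mod_cast (by omega : 1 ≤ c)) (by exact_mod_cast hN)
  have hx : 1 ≤ ENNReal.ofReal (1 / (1 - ε)) :=
    ENNReal.one_le_ofReal.2 (by rw [le_div_iff₀ h1ε]; linarith)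
  calc _ ≤ hyperMeasure n p hp1 {ω | HasLargeJComponent (edgesOf ω k) j m} :=
        measure_mono fun _ => hasLargeJComponent_floor_add_one hM
    _ ≤ n.choose j * ((1 - p + p * ENNReal.ofReal (1 / (1 - ε))) ^ (m * N) /
          ENNReal.ofReal (1 / (1 - ε)) ^ (((m : ℝ) - 1) / c)) :=
        measure_hasLargeJComponent_le hp1 hx ENNReal.ofReal_ne_top (Nat.add_one_pos _)
    _ = ENNReal.ofReal (n.choose j * ((1 + ε * (1 / (c * N))) ^ (m * N) /
          (1 / (1 - ε)) ^ (((m : ℝ) - 1) / c))) := by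
        conv_rhs => rw [ENNReal.ofReal_mul (by positivity),
          ENNReal.ofReal_div_of_pos (by positivity), ENNReal.ofReal_pow (by positivity),
          ← ENNReal.ofReal_rpow_of_pos (by positivity), ENNReal.ofReal_natCast]
        rw [hp, hcR, one_sub_add_mul_ofReal_eq (by positivity) hε1
          (mul_le_one₀ (by linarith) (by positivity) (div_le_one_of_le₀ hcN (by positivity)))]
    _ ≤ ENNReal.ofReal (Real.exp 2 / n) := by
        refine ENNReal.ofReal_le_ofReal ?_
        rw [← div_eq_mul_one_div]
        exact choose_mul_pow_div_rpow_le hε0 hε1 hjk (by omega) hN (by omega)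
          (Nat.le_add_left 1 _) (by rw [← hcR, ← hMdef]; exact_mod_cast (Nat.lt_floor_add_one M).le)

end RandomHypergraph

theorem stmt10_general (j k : ℕ) (hj : 1 ≤ j) (hjk : j < k)
    (ε : ℕ → ℝ) (hεpos : ∀ n, 0 < ε n) (hε0 : Tendsto ε atTop (nhds 0))
    (p : ℕ → ℝ≥0∞) (hp1 : ∀ n, p n ≤ 1)
    (hp : ∀ n, p n = ENNReal.ofReal
      ((1 - ε n) * (1 / (((k.choose j : ℝ) - 1) * (n.choose (k - j) : ℝ))))) :
    Tendsto (fun n =>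
      hyperMeasure n (p n) (hp1 n)
        {ω | ∀ S : Finset (Finset (Fin n)),
          (∀ J ∈ S, J.card = j) →
          (∀ J₁ ∈ S, ∀ J₂ ∈ S, jConn (edgesOf ω k) j J₁ J₂) →
          (S.card : ℝ) ≤ 3 * ((k.choose j : ℝ) - 1) * k * Real.log n / (ε n) ^ 2})
      atTop (nhds (1 : ℝ≥0∞)) := by
  refine RandomHypergraph.tendsto_measure_of_tendsto_measure_compl (fun _ => .of_discrete) ?_
  refine tendsto_of_tendsto_of_tendsto_of_le_of_le' tendsto_const_nhds
    (h := fun n : ℕ => ENNReal.ofReal (Real.exp 2 / n)) ?_ (.of_forall fun _ => zero_le) ?_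
  · simpa using ENNReal.tendsto_ofReal (tendsto_const_nhds.div_atTop tendsto_natCast_atTop_atTop)
  · filter_upwards [hε0.eventually_lt_const zero_lt_one, eventually_ge_atTop k] with n hεn hkn
    exact RandomHypergraph.hyperMeasure_compl_jComponents_le hj hjk hkn (hεpos n) hεn (hp1 n) (hp n)

/-- Subcritical phase: with `c = C(k,j)-1`, `p₀ = 1/(c·C(n,k-j))` and `p = (1-ε)p₀`
where `ε → 0` and `ε³nʲ → ∞`, whp every `j`-component of `H^k(n,p)` (i.e. every family
of `j`-sets that is pairwise `j`-connected) contains at most `3ck·ε⁻²·log n` `j`-sets. -/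
theorem stmt10 (j k : ℕ) (hj : 1 ≤ j) (hjk : j < k)
    (ε : ℕ → ℝ) (hεpos : ∀ n, 0 < ε n) (hε0 : Tendsto ε atTop (nhds 0))
    (hε3 : Tendsto (fun n => (ε n) ^ 3 * (n : ℝ) ^ j) atTop atTop)
    (p : ℕ → ℝ≥0∞) (hp1 : ∀ n, p n ≤ 1)
    (hp : ∀ n, p n = ENNReal.ofReal
      ((1 - ε n) * (1 / (((k.choose j : ℝ) - 1) * (n.choose (k - j) : ℝ))))) :
    Tendsto (fun n =>
      hyperMeasure n (p n) (hp1 n)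
        {ω | ∀ S : Finset (Finset (Fin n)),
          (∀ J ∈ S, J.card = j) →
          (∀ J₁ ∈ S, ∀ J₂ ∈ S, jConn (edgesOf ω k) j J₁ J₂) →
          (S.card : ℝ) ≤ 3 * ((k.choose j : ℝ) - 1) * k * Real.log n / (ε n) ^ 2})
      atTop (nhds (1 : ℝ≥0∞)) :=
  stmt10_general j k hj hjk ε hεpos hε0 p hp1 hp
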